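/- Let n ≥ 1, l ≥ 0 with 2l ≤ n, and let S = {α ∈ ℤ^n : ∑_{i=1}^{l} α_{2i-1}·α_{2i} ≡ 0 (mod 2)}. Then the set Σ(S) of saturated elements of S equals Λ^{(2l)} = {α ∈ ℤ^n : α_i is even for all i ≤ 2l}. -/

import Mathlib

/-!
Write `Q α = ∑ᵢ α(aᵢ) α(bᵢ)` for a family of disjoint coordinate pairs `(aᵢ, bᵢ)`, so that
`S = {α | Q α even}`. Since `Q (γ + σ) = Q γ + Q σ + ∑ᵢ (γ(aᵢ) σ(bᵢ) + σ(aᵢ) γ(bᵢ))`, an element with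
even paired coordinates is saturated. Conversely, adding the unit vector at `bₖ` (which lies in `S`)
changes `Q γ` by exactly `γ(aₖ)`, so a saturated `γ` has `γ(aₖ)` even; symmetrically for `γ(bₖ)`.
-/

/-- The set of saturated elements of a subset `S` of an additive group. -/
def saturated {Λ : Type*} [AddCommGroup Λ] (S : Set Λ) : Set Λ :=
  {γ ∈ S | ∀ σ ∈ S, γ + σ ∈ S}

open Function

section PairingSum

variable {ι κ R : Type*} [Fintype ι] [CommRing R]

def pairingSum (a b : ι → κ) (α : κ → R) : R :=
  ∑ i, α (a i) * α (b i)

theorem pairingSum_comm (a b : ι → κ) (α : κ → R) : pairingSum a b α = pairingSum b a α := by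
  simp only [pairingSum, mul_comm]

theorem pairingSum_add (a b : ι → κ) (γ σ : κ → R) :
    pairingSum a b (γ + σ) =
      pairingSum a b γ + pairingSum a b σ + ∑ i, (γ (a i) * σ (b i) + σ (a i) * γ (b i)) := by
  simp only [pairingSum, Pi.add_apply, ← Finset.sum_add_distrib]
  exact Finset.sum_congr rfl fun i _ ↦ by ring

variable {a b : ι → κ}

theorem pairingSum_single_right [DecidableEq κ] (hab : ∀ i j, a i ≠ b j) (k : ι) :
    pairingSum a b (Pi.single (b k) (1 : R)) = 0 :=
  Finset.sum_eq_zero fun i _ ↦ by rw [Pi.single_eq_of_ne (hab i k), zero_mul]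

theorem pairingSum_add_single_right [DecidableEq κ] (hb : Injective b) (hab : ∀ i j, a i ≠ b j)
    (γ : κ → R) (k : ι) :
    pairingSum a b (γ + Pi.single (b k) 1) = pairingSum a b γ + γ (a k) := by
  classical
  have hsingle : ∀ i, (Pi.single (b k) (1 : R) : κ → R) (b i) = if i = k then 1 else 0 :=
    fun i ↦ by simp only [Pi.single_apply, hb.eq_iff]
  simp only [pairingSum, Pi.add_apply, Pi.single_eq_of_ne (hab _ k), add_zero, mul_add,
    Finset.sum_add_distrib, hsingle, mul_ite, mul_one, mul_zero, Finset.sum_ite_eq',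
    Finset.mem_univ, if_true]

theorem even_apply_left_of_mem_saturated (hb : Injective b) (hab : ∀ i j, a i ≠ b j)
    {γ : κ → R} (hγ : γ ∈ saturated {α | Even (pairingSum a b α)}) (k : ι) : Even (γ (a k)) := by
  classical
  obtain ⟨hγS, hsat⟩ := hγ
  have hsum := hsat (Pi.single (b k) 1) (by simp [pairingSum_single_right hab k])
  rw [Set.mem_ofPred_eq, pairingSum_add_single_right hb hab] at hsum
  simpa using hsum.sub hγS

theorem saturated_setOf_even_pairingSum (ha : Injective a) (hb : Injective b)
    (hab : ∀ i j, a i ≠ b j) :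
    saturated {α : κ → R | Even (pairingSum a b α)} =
      {γ | ∀ i, Even (γ (a i)) ∧ Even (γ (b i))} := by
  ext γ
  constructor
  · intro hγ i
    refine ⟨even_apply_left_of_mem_saturated hb hab hγ i, ?_⟩
    simp only [pairingSum_comm a b] at hγ
    exact even_apply_left_of_mem_saturated ha (fun i j h ↦ hab j i h.symm) hγ i
  · intro hγ
    have hγS : Even (pairingSum a b γ) :=
      Finset.even_sum _ fun i _ ↦ (hγ i).1.mul_right _
    refine ⟨hγS, fun σ hσ ↦ ?_⟩
    rw [Set.mem_ofPred_eq, pairingSum_add]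
    exact (hγS.add hσ).add <| Finset.even_sum _ fun i _ ↦
      ((hγ i).1.mul_right _).add ((hγ i).2.mul_left _)

end PairingSum

theorem stmt_14 (n l : ℕ) (h2l : 2 * l ≤ n) :
    saturated {α : Fin n → ℤ |
        Even (∑ i : Fin l,
          α ⟨2 * i.val, by have := i.isLt; omega⟩ *
          α ⟨2 * i.val + 1, by have := i.isLt; omega⟩)}
      = {α : Fin n → ℤ | ∀ i : Fin n, i.val < 2 * l → (2 : ℤ) ∣ α i} := by
  let a : Fin l → Fin n := fun i ↦ ⟨2 * i.val, by have := i.isLt; omega⟩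
  let b : Fin l → Fin n := fun i ↦ ⟨2 * i.val + 1, by have := i.isLt; omega⟩
  have ha : Injective a := fun i j h ↦ Fin.ext (by simpa [a] using h)
  have hb : Injective b := fun i j h ↦ Fin.ext (by simpa [b] using h)
  have hab : ∀ i j, a i ≠ b j := fun i j h ↦ by simp [a, b, Fin.ext_iff] at h; omega
  change saturated {α : Fin n → ℤ | Even (pairingSum a b α)} = _
  rw [saturated_setOf_even_pairingSum ha hb hab]
  ext γ
  simp only [Set.mem_ofPred_eq, even_iff_two_dvd]
  constructor
  · intro hγ i hi
    obtain ⟨k, hk | hk⟩ : ∃ k : Fin l, i = a k ∨ i = b k :=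
      ⟨⟨i / 2, by omega⟩, by simp only [a, b, Fin.ext_iff]; omega⟩
    exacts [hk ▸ (hγ k).1, hk ▸ (hγ k).2]
  · exact fun hγ k ↦ ⟨hγ (a k) (by simp only [a]; omega), hγ (b k) (by simp only [b]; omega)⟩
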